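/- Let w be a signed two-rowed array on signed alphabets Σ and Σ′ with rows x₁…x_k and y₁…y_k. Then the recording filling Q(w), obtained by placing xᵢ in the box added at the i-th right-insertion step while computing T(y₁⋯y_k), is a super tableau over Σ; moreover T(w) and Q(w) have the same shape and each contains k boxes. -/

import Mathlib

open List

/- ## Signed alphabets and super tableaux

A signed alphabet is modelled by a linearly ordered type together with a
signature map into `ZMod 2`.  A (super) tableau is modelled by its list of
rows, listed from top to bottom. -/

/-- One-row step of super Schensted right insertion: insert `x` into the row,
returning the updated row together with the bumped letter (if any). -/
def insertRow {A : Type*} [LinearOrder A] (sg : A → ZMod 2) :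
    List A → A → List A × Option A
  | [], x => ([x], none)
  | y :: ys, x =>
    if (if sg x = 0 then x < y else x ≤ y) then (x :: ys, some y)
    else
      let p := insertRow sg ys x
      (y :: p.1, p.2)

/-- Super Schensted right insertion of a letter into a tableau (list of rows),
also returning the row index of the box added to the shape. -/
def rInsertIdx {A : Type*} [LinearOrder A] (sg : A → ZMod 2) :
    List (List A) → A → List (List A) × ℕ
  | [], x => ([[x]], 0)
  | r :: rs, x =>
    match insertRow sg r x with
    | (r', none) => (r' :: rs, 0)
    | (r', some y) =>
      let p := rInsertIdx sg rs y
      (r' :: p.1, p.2 + 1)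

/-- Right insertion `t ▷ x`. -/
def rIns {A : Type*} [LinearOrder A] (sg : A → ZMod 2) (t : List (List A)) (x : A) :
    List (List A) :=
  (rInsertIdx sg t x).1

/-- The insertion tableau `T(w)` of a word `w`. -/
def insertWord {A : Type*} [LinearOrder A] (sg : A → ZMod 2) (w : List A) :
    List (List A) :=
  w.foldl (rIns sg) []

/-- The shape of a tableau: the list of its row lengths. -/
def shape {A : Type*} (t : List (List A)) : List ℕ := t.map List.length

/-- Add a box labelled `x` at the end of row `i` (possibly creating a new row). -/
def addBox {B : Type*} : List (List B) → ℕ → B → List (List B)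
  | [], _, x => [[x]]
  | r :: rs, 0, x => (r ++ [x]) :: rs
  | r :: rs, i + 1, x => r :: addBox rs i x

/-- The super-RSK map: a signed two-rowed array is modelled by its list of
columns (couples); the first component of the result is the insertion tableau
`T(w)` of the bottom row, the second is the recording tableau `Q(w)` obtained
by placing the letters of the top row in the successively added boxes. -/
def RSK {A B : Type*} [LinearOrder B] (sg : B → ZMod 2) (w : List (A × B)) :
    List (List B) × List (List A) :=
  w.foldl
    (fun p xy =>
      let q := rInsertIdx sg p.1 xy.2
      (q.1, addBox p.2 q.2 xy.1))
    ([], [])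

/-- Row condition of a super tableau: weakly increasing, with equal adjacent
entries allowed only for letters of signature `0`. -/
def RowOK {A : Type*} [LinearOrder A] (sg : A → ZMod 2) (r : List A) : Prop :=
  r.Chain' fun a b => a < b ∨ (a = b ∧ sg a = 0)

/-- Column condition between a row `r` and the row `r'` directly below it:
weakly increasing along columns, with equal entries allowed only for letters
of signature `1`. -/
def ColsOK {A : Type*} [LinearOrder A] (sg : A → ZMod 2) (r r' : List A) : Prop :=
  ∀ j : ℕ, ∀ b ∈ r[j]?, ∀ a ∈ r'[j]?, b < a ∨ (b = a ∧ sg b = 1)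

/-- Super (semistandard Young) tableau over a signed alphabet. -/
def IsSuperTableau {A : Type*} [LinearOrder A] (sg : A → ZMod 2)
    (t : List (List A)) : Prop :=
  (∀ r ∈ t, r ≠ []) ∧
  (shape t).Chain' (fun p q => q ≤ p) ∧
  (∀ r ∈ t, RowOK sg r) ∧
  t.Chain' (ColsOK sg)

/-- The strict order on couples used for signed two-rowed arrays. -/
def pairLt {A B : Type*} [LinearOrder A] [LinearOrder B]
    (sgA : A → ZMod 2) (p q : A × B) : Prop :=
  p.1 < q.1 ∨ (p.1 = q.1 ∧ ((sgA p.1 = 0 ∧ p.2 < q.2) ∨ (sgA p.1 = 1 ∧ q.2 < p.2)))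

/-- A signed two-rowed array on two signed alphabets, given by its list
of columns: consecutive couples weakly increase, equal consecutive couples
being allowed only when the couple has signature `0`. -/
def IsSignedArray {A B : Type*} [LinearOrder A] [LinearOrder B]
    (sgA : A → ZMod 2) (sgB : B → ZMod 2) (w : List (A × B)) : Prop :=
  w.Chain' fun p q => pairLt sgA p q ∨ (p = q ∧ sgA p.1 + sgB p.2 = 0)

/-- Maximum of a list of naturals. -/
def listMaxN (l : List ℕ) : ℕ := l.foldl max 0

/-!
Insertion preserves super tableaux, and the row bumping lemma compares the rows in which two
successive insertions add their boxes: a letter that does not bump its predecessor lands weakly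
higher, one that bumps it lands strictly lower. In a signed two-rowed array, equal top letters
of signature `0` carry bottom letters that do not bump their predecessors, and equal top letters
of signature `1` carry bottom letters that do. Hence the copies of a signature-`0` letter are
recorded from left to right in a horizontal strip and those of a signature-`1` letter from top to
bottom in a vertical strip. Since each recorded letter is also the largest one so far, every new
box of the recording tableau respects the row and column conditions; its shape is that of the
insertion tableau because both grow by the same box at each step.
-/

section Bumps

variable {A : Type*} [LinearOrder A] {sg : A → ZMod 2}

lemma zmod_two_eq_zero_or_eq_one (z : ZMod 2) : z = 0 ∨ z = 1 := by
  revert z; decide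

/-- `Bumps sg x y`: during row insertion the letter `x` bumps the entry `y`. -/
def Bumps (sg : A → ZMod 2) (x y : A) : Prop := if sg x = 0 then x < y else x ≤ y

lemma bumps_iff {x y : A} : Bumps sg x y ↔ x < y ∨ x = y ∧ sg x = 1 := by
  unfold Bumps
  rcases zmod_two_eq_zero_or_eq_one (sg x) with h | h <;> simp [h, le_iff_lt_or_eq]

lemma bumps_self_iff {x : A} : Bumps sg x x ↔ sg x = 1 := by
  simp [bumps_iff]

lemma not_bumps_iff {x y : A} : ¬ Bumps sg y x ↔ x < y ∨ x = y ∧ sg x = 0 := by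
  rcases eq_or_ne x y with rfl | hne
  · rcases zmod_two_eq_zero_or_eq_one (sg x) with h | h <;> simp [bumps_self_iff, h]
  · unfold Bumps
    split_ifs <;> simp [le_iff_lt_or_eq, hne, hne.symm]

lemma bumps_of_lt {x y : A} (h : x < y) : Bumps sg x y :=
  bumps_iff.2 (Or.inl h)

lemma Bumps.le {x y : A} (h : Bumps sg x y) : x ≤ y := by
  rcases bumps_iff.1 h with h | ⟨rfl, -⟩
  exacts [h.le, le_rfl]

lemma Bumps.trans_le {x y z : A} (h : Bumps sg x y) (hyz : y ≤ z) : Bumps sg x z := by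
  unfold Bumps at h ⊢
  split_ifs at h ⊢
  exacts [h.trans_le hyz, h.trans hyz]

lemma Bumps.trans {x y z : A} (hxy : Bumps sg x y) (hyz : Bumps sg y z) : Bumps sg x z :=
  hxy.trans_le hyz.le

lemma Bumps.trans_not_bumps {x y z : A} (h : Bumps sg x y) (hzy : ¬ Bumps sg z y) :
    Bumps sg x z := by
  rcases not_bumps_iff.1 hzy with hyz | ⟨rfl, -⟩
  exacts [h.trans_le hyz.le, h]

lemma not_bumps_trans {x y z : A} (hxy : ¬ Bumps sg y x) (hyz : ¬ Bumps sg z y) :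
    ¬ Bumps sg z x := fun hzx => hyz (hzx.trans_not_bumps hxy)

lemma rowOK_iff_pairwise {r : List A} : RowOK sg r ↔ r.Pairwise fun a b => ¬ Bumps sg b a := by
  have : Trans (fun a b : A => ¬ Bumps sg b a) (fun a b => ¬ Bumps sg b a)
      (fun a b => ¬ Bumps sg b a) := ⟨fun hab hbc => not_bumps_trans hab hbc⟩
  rw [← List.isChain_iff_pairwise]
  simp only [not_bumps_iff]
  rfl

lemma rowOK_iff_getElem? {r : List A} : RowOK sg r ↔
    ∀ (k l : ℕ) (a b : A), k < l → r[k]? = some a → r[l]? = some b → ¬ Bumps sg b a := by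
  simp only [rowOK_iff_pairwise, List.pairwise_iff_getElem, List.getElem?_eq_some_iff]
  constructor
  · rintro h k l a b hkl ⟨hk, rfl⟩ ⟨hl, rfl⟩
    exact h k l hk hl hkl
  · exact fun h k l hk hl hkl => h k l _ _ hkl ⟨hk, rfl⟩ ⟨hl, rfl⟩

lemma rowOK_append_singleton {r : List A} {x : A} :
    RowOK sg (r ++ [x]) ↔ RowOK sg r ∧ ∀ a ∈ r, ¬ Bumps sg x a := by
  simp [rowOK_iff_pairwise, List.pairwise_append]

lemma colsOK_iff {r r₁ : List A} :
    ColsOK sg r r₁ ↔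
      ∀ (m : ℕ) (b a : A), r[m]? = some b → r₁[m]? = some a → Bumps sg b a := by
  simp only [ColsOK, Option.mem_def, ← bumps_iff]
  exact ⟨fun h m b a hb ha => h m b hb a ha, fun h m b hb a ha => h m b a hb ha⟩

lemma colsOK_append_singleton_left {r r₁ : List A} (hc : ColsOK sg r r₁)
    (hlen : r₁.length ≤ r.length) (x : A) : ColsOK sg (r ++ [x]) r₁ := by
  rw [colsOK_iff] at hc ⊢
  intro m b a hb ha
  have hm := (List.getElem?_eq_some_iff.1 ha).1
  rw [List.getElem?_append_left (by omega)] at hb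
  exact hc m b a hb ha

lemma colsOK_append_singleton_right {r r₁ : List A} {x : A} (hc : ColsOK sg r r₁)
    (hx : ∀ a, r[r₁.length]? = some a → Bumps sg a x) : ColsOK sg r (r₁ ++ [x]) := by
  rw [colsOK_iff] at hc ⊢
  intro m b a hb ha
  have hm : m < r₁.length + 1 := by simpa using (List.getElem?_eq_some_iff.1 ha).1
  rcases Nat.lt_succ_iff_lt_or_eq.1 hm with hm | rfl
  · rw [List.getElem?_append_left hm] at ha
    exact hc m b a hb ha
  · simp only [List.getElem?_concat_length, Option.some.injEq] at ha
    exact ha ▸ hx b hb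

end Bumps

section Shape

variable {B C : Type*}

lemma length_eq_of_shape_eq {t : List (List B)} {q : List (List C)} (h : shape t = shape q) :
    t.length = q.length := by
  simpa [shape] using congrArg List.length h

lemma length_getD_eq_of_shape_eq {t : List (List B)} {q : List (List C)} (h : shape t = shape q)
    (k : ℕ) : (t.getD k []).length = (q.getD k []).length := by
  rw [← List.getD_map t [] List.length, ← List.getD_map q [] List.length]
  exact congrArg (·.getD k 0) h

lemma length_flatten_eq_of_shape_eq {t : List (List B)} {q : List (List C)}
    (h : shape t = shape q) : t.flatten.length = q.flatten.length := by
  rw [List.length_flatten, List.length_flatten]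
  exact congrArg List.sum h

lemma shape_addBox_congr {t : List (List B)} {q : List (List C)} (h : shape t = shape q)
    (i : ℕ) (y : B) (x : C) : shape (addBox t i y) = shape (addBox q i x) := by
  induction t generalizing q i with
  | nil => cases q with
    | nil => rfl
    | cons => simp [shape] at h
  | cons r rs ih =>
    cases q with
    | nil => simp [shape] at h
    | cons r' q =>
      simp only [shape, List.map_cons, List.cons.injEq] at h
      cases i with
      | zero => simp [addBox, shape, h.1, h.2]
      | succ i => simpa [addBox, shape, h.1] using ih h.2 i

lemma length_flatten_addBox (q : List (List C)) (i : ℕ) (x : C) :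
    (addBox q i x).flatten.length = q.flatten.length + 1 := by
  induction q generalizing i with
  | nil => rfl
  | cons r q ih =>
    cases i with
    | zero => simp [addBox]; omega
    | succ i => simp [addBox, ih]; omega

lemma getD_addBox {q : List (List C)} {i : ℕ} (hi : i ≤ q.length) (x : C) (k : ℕ) :
    (addBox q i x).getD k [] = if k = i then q.getD i [] ++ [x] else q.getD k [] := by
  induction q generalizing i k with
  | nil =>
    obtain rfl : i = 0 := by simpa using hi
    cases k <;> simp [addBox]
  | cons r q ih =>
    cases i <;> cases k <;> simp_all [addBox]

lemma getElem?_getD_addBox_eq_some_iff {q : List (List C)} {i : ℕ} (hi : i ≤ q.length)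
    {x a : C} {k j : ℕ} : ((addBox q i x).getD k [])[j]? = some a ↔
      (k = i ∧ j = (q.getD i []).length ∧ a = x) ∨ (q.getD k [])[j]? = some a := by
  rw [getD_addBox hi]
  split_ifs with hk
  · subst hk
    generalize q.getD k [] = r
    rcases lt_trichotomy j r.length with hj | rfl | hj
    · simp [List.getElem?_append_left hj, hj.ne]
    · simp [eq_comm]
    · simp [List.getElem?_eq_none (by simp; omega : (r ++ [x]).length ≤ j), hj.ne',
        List.getElem?_eq_none hj.le]
  · simp [hk]

end Shape

section Tableau

variable {A : Type*} [LinearOrder A] {sg : A → ZMod 2}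

lemma isSuperTableau_iff {t : List (List A)} :
    IsSuperTableau sg t ↔ (∀ r ∈ t, r ≠ []) ∧ (shape t).IsChain (fun p q => q ≤ p) ∧
      (∀ r ∈ t, RowOK sg r) ∧ t.IsChain (ColsOK sg) :=
  Iff.rfl

lemma isSuperTableau_nil : IsSuperTableau sg [] := by
  simp [isSuperTableau_iff, shape]

lemma isSuperTableau_cons {r : List A} {rs : List (List A)} :
    IsSuperTableau sg (r :: rs) ↔ r ≠ [] ∧ RowOK sg r ∧
      (rs.headD []).length ≤ r.length ∧ ColsOK sg r (rs.headD []) ∧ IsSuperTableau sg rs := by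
  cases rs with
  | nil => simp [isSuperTableau_iff, shape, ColsOK]
  | cons r₁ rs =>
    simp only [isSuperTableau_iff, shape, List.map_cons, List.isChain_cons_cons, List.mem_cons,
      forall_eq_or_imp, List.headD_cons]
    tauto

lemma IsSuperTableau.length_getD_antitone {t : List (List A)} (ht : IsSuperTableau sg t)
    {k l : ℕ} (hkl : k ≤ l) : (t.getD l []).length ≤ (t.getD k []).length := by
  induction t generalizing k l with
  | nil => simp
  | cons r rs ih =>
    obtain ⟨-, -, hlen, -, hrs⟩ := isSuperTableau_cons.1 ht
    rcases k with _ | k <;> rcases l with _ | l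
    · exact le_rfl
    · have hhead : rs.getD 0 [] = rs.headD [] := by cases rs <;> rfl
      simpa using (ih hrs (Nat.zero_le l)).trans (hhead ▸ hlen)
    · omega
    · simpa using ih hrs (by omega)

lemma isSuperTableau_singleton (x : A) : IsSuperTableau sg [[x]] :=
  isSuperTableau_cons.2 ⟨List.cons_ne_nil _ _, List.isChain_singleton x, by simp,
    by simp [ColsOK], isSuperTableau_nil⟩

lemma IsSuperTableau.rowOK {t : List (List A)} (ht : IsSuperTableau sg t) :
    ∀ r ∈ t, RowOK sg r :=
  ht.2.2.1

end Tableau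

section RowInsertion

variable {A : Type*} [LinearOrder A] {sg : A → ZMod 2}

lemma insertRow_cons_of_bumps {x y : A} (ys : List A) (h : Bumps sg x y) :
    insertRow sg (y :: ys) x = (x :: ys, some y) :=
  if_pos h

lemma insertRow_cons_of_not_bumps {x y : A} (ys : List A) (h : ¬ Bumps sg x y) :
    insertRow sg (y :: ys) x = (y :: (insertRow sg ys x).1, (insertRow sg ys x).2) :=
  if_neg h

/-- `r'` arises from `r` by writing `x` at position `j`, the first position whose entry is
bumped by `x` (or the end of the row), and `o` is the entry previously there. -/
structure IsRowInsertion (sg : A → ZMod 2) (r : List A) (x : A) (j : ℕ) (r' : List A)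
    (o : Option A) : Prop where
  le_length : j ≤ r.length
  not_bumps_of_lt : ∀ k < j, ∀ a, r[k]? = some a → ¬ Bumps sg x a
  bumps : ∀ a, r[j]? = some a → Bumps sg x a
  getElem?_eq : ∀ k, r'[k]? = if k = j then some x else r[k]?
  length_eq : r'.length = max r.length (j + 1)
  bumped_eq : o = r[j]?

lemma insertRow_isRowInsertion (sg : A → ZMod 2) (r : List A) (x : A) :
    ∃ j, IsRowInsertion sg r x j (insertRow sg r x).1 (insertRow sg r x).2 := by
  induction r with
  | nil =>
    refine ⟨0, ⟨le_rfl, by simp, by simp, fun k => ?_, rfl, rfl⟩⟩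
    cases k <;> simp [insertRow]
  | cons y ys ih =>
    by_cases h : Bumps sg x y
    · rw [insertRow_cons_of_bumps ys h]
      refine ⟨0, ⟨by simp, by simp, by simpa using h, fun k => ?_, by simp, rfl⟩⟩
      cases k <;> simp
    · obtain ⟨j, hj⟩ := ih
      rw [insertRow_cons_of_not_bumps ys h]
      refine ⟨j + 1, ⟨by simpa using hj.le_length, fun k hk a ha => ?_, by simpa using hj.bumps,
        fun k => ?_, by simp [hj.length_eq], by simpa using hj.bumped_eq⟩⟩
      · cases k with
        | zero => cases ha; exact h
        | succ k => exact hj.not_bumps_of_lt k (by omega) a ha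
      · cases k <;> simp [hj.getElem?_eq]

namespace IsRowInsertion

variable {r r' : List A} {x : A} {j : ℕ} {o : Option A}

lemma bumped_eq_none_iff (h : IsRowInsertion sg r x j r' o) : o = none ↔ j = r.length := by
  rw [h.bumped_eq, List.getElem?_eq_none_iff]
  exact ⟨fun h' => le_antisymm h.le_length h', fun h' => h'.ge⟩

lemma ne_nil (h : IsRowInsertion sg r x j r' o) : r' ≠ [] := by
  intro hr'
  simpa [hr'] using h.getElem?_eq j

lemma le_of_bumps (h : IsRowInsertion sg r x j r' o) {m : ℕ}
    (hm : ∀ a, r[m]? = some a → Bumps sg x a) : j ≤ m := by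
  by_contra! hmj
  have := h.le_length
  obtain ⟨a, ha⟩ : ∃ a, r[m]? = some a :=
    Option.isSome_iff_exists.1 (by simp; omega)
  exact h.not_bumps_of_lt m hmj a ha (hm a ha)

lemma bumps_bumped_of_lt (h : IsRowInsertion sg r x j r' o) (hr : RowOK sg r) {y b : A} {k : ℕ}
    (hy : r[j]? = some y) (hk : k < j) (hb : r[k]? = some b) : Bumps sg b y := by
  rcases not_bumps_iff.1 (rowOK_iff_getElem?.1 hr k j b y hk hb hy) with hby | ⟨rfl, -⟩
  · exact _root_.bumps_of_lt hby
  · exact absurd (h.bumps b hy) (h.not_bumps_of_lt k hk b hb)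

lemma rowOK (h : IsRowInsertion sg r x j r' o) (hr : RowOK sg r) : RowOK sg r' := by
  rw [rowOK_iff_getElem?] at hr ⊢
  intro k l a b hkl ha hb
  rw [h.getElem?_eq] at ha hb
  split_ifs at ha hb with hk hl hl
  · omega
  · cases ha
    have hl := (List.getElem?_eq_some_iff.1 hb).1
    obtain ⟨y, hy⟩ : ∃ y, r[j]? = some y := Option.isSome_iff_exists.1 (by simp; omega)
    exact fun hbx => hr j l y b (by omega) hy hb (hbx.trans (h.bumps y hy))
  · cases hb
    exact h.not_bumps_of_lt k (by omega) a ha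
  · exact hr k l a b hkl ha hb

lemma colsOK_of_bumped_none (h : IsRowInsertion sg r x j r' none) {r₁ : List A}
    (hc : ColsOK sg r r₁) (hlen : r₁.length ≤ r.length) : ColsOK sg r' r₁ := by
  have hj := h.bumped_eq_none_iff.1 rfl
  rw [colsOK_iff] at hc ⊢
  intro m b a hb ha
  have hm := (List.getElem?_eq_some_iff.1 ha).1
  rw [h.getElem?_eq, if_neg (by omega)] at hb
  exact hc m b a hb ha

variable {r₁ r₁' : List A} {y : A} {j₁ : ℕ} {o₁ : Option A}

lemma le_of_colsOK (h : IsRowInsertion sg r x j r' (some y))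
    (h₁ : IsRowInsertion sg r₁ y j₁ r₁' o₁) (hc : ColsOK sg r r₁) : j₁ ≤ j :=
  h₁.le_of_bumps fun a ha => colsOK_iff.1 hc j y a h.bumped_eq.symm ha

lemma length_le_of_colsOK (h : IsRowInsertion sg r x j r' (some y))
    (h₁ : IsRowInsertion sg r₁ y j₁ r₁' o₁) (hc : ColsOK sg r r₁)
    (hlen : r₁.length ≤ r.length) : r₁'.length ≤ r.length := by
  have hj₁ := h.le_of_colsOK h₁ hc
  have hj := (List.getElem?_eq_some_iff.1 h.bumped_eq.symm).1
  rw [h₁.length_eq]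
  omega

lemma colsOK (h : IsRowInsertion sg r x j r' (some y))
    (h₁ : IsRowInsertion sg r₁ y j₁ r₁' o₁)
    (hr : RowOK sg r) (hc : ColsOK sg r r₁) : ColsOK sg r' r₁' := by
  have hj₁ := h.le_of_colsOK h₁ hc
  have hy : r[j]? = some y := h.bumped_eq.symm
  rw [colsOK_iff] at hc ⊢
  intro m b a hb ha
  rw [h.getElem?_eq] at hb
  rw [h₁.getElem?_eq] at ha
  split_ifs at hb ha with hmj hmj₁ hmj₁
  · cases hb; cases ha; exact h.bumps y hy
  · cases hb; exact (h.bumps y hy).trans (hc m y a (hmj ▸ hy) ha)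
  · cases ha; exact h.bumps_bumped_of_lt hr hy (by omega) hb
  · exact hc m b a hb ha

end IsRowInsertion

end RowInsertion

section Insertion

variable {A : Type*} [LinearOrder A] {sg : A → ZMod 2}

lemma rInsertIdx_cons_of_none {r : List A} {rs : List (List A)} {x : A}
    (h : (insertRow sg r x).2 = none) :
    rInsertIdx sg (r :: rs) x = ((insertRow sg r x).1 :: rs, 0) := by
  rw [rInsertIdx, ← Prod.mk.eta (p := insertRow sg r x), h]

lemma rInsertIdx_cons_of_some {r : List A} {rs : List (List A)} {x y : A}
    (h : (insertRow sg r x).2 = some y) :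
    rInsertIdx sg (r :: rs) x =
      ((insertRow sg r x).1 :: (rInsertIdx sg rs y).1, (rInsertIdx sg rs y).2 + 1) := by
  rw [rInsertIdx, ← Prod.mk.eta (p := insertRow sg r x), h]

lemma headD_rInsertIdx_fst (rs : List (List A)) (y : A) :
    (rInsertIdx sg rs y).1.headD [] = (insertRow sg (rs.headD []) y).1 := by
  rcases rs with _ | ⟨r₁, rs⟩
  · rfl
  · rcases ho : (insertRow sg r₁ y).2 with _ | z
    · simp [rInsertIdx_cons_of_none ho]
    · simp [rInsertIdx_cons_of_some ho]

theorem IsSuperTableau.rInsertIdx {t : List (List A)} (ht : IsSuperTableau sg t) (x : A) :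
    IsSuperTableau sg (rInsertIdx sg t x).1 := by
  induction t generalizing x with
  | nil => exact isSuperTableau_singleton x
  | cons r rs ih =>
    obtain ⟨-, hr, hlen, hc, hrs⟩ := isSuperTableau_cons.1 ht
    obtain ⟨j, hj⟩ := insertRow_isRowInsertion sg r x
    rcases ho : (insertRow sg r x).2 with _ | y <;> rw [ho] at hj
    · rw [rInsertIdx_cons_of_none ho]
      refine isSuperTableau_cons.2
        ⟨hj.ne_nil, hj.rowOK hr, ?_, hj.colsOK_of_bumped_none hc hlen, hrs⟩
      rw [hj.length_eq]
      omega
    · rw [rInsertIdx_cons_of_some ho]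
      obtain ⟨j₁, hj₁⟩ := insertRow_isRowInsertion sg (rs.headD []) y
      refine isSuperTableau_cons.2 ⟨hj.ne_nil, hj.rowOK hr, ?_, ?_, ih hrs y⟩ <;>
        rw [headD_rInsertIdx_fst]
      · rw [hj.length_eq]
        exact (hj.length_le_of_colsOK hj₁ hc hlen).trans (le_max_left _ _)
      · exact hj.colsOK hj₁ hr hc

theorem shape_rInsertIdx (t : List (List A)) (x : A) :
    shape (rInsertIdx sg t x).1 = shape (addBox t (rInsertIdx sg t x).2 x) := by
  induction t generalizing x with
  | nil => rfl
  | cons r rs ih =>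
    obtain ⟨j, hj⟩ := insertRow_isRowInsertion sg r x
    rcases ho : (insertRow sg r x).2 with _ | y <;> rw [ho] at hj
    · have := hj.bumped_eq_none_iff.1 rfl
      simp [rInsertIdx_cons_of_none ho, addBox, shape, hj.length_eq, this]
    · have := (List.getElem?_eq_some_iff.1 hj.bumped_eq.symm).1
      simp only [rInsertIdx_cons_of_some ho, addBox, shape, List.map_cons, hj.length_eq]
      refine congrArg₂ _ (by omega) ?_
      exact (ih y).trans (shape_addBox_congr rfl _ y x)

lemma rInsertIdx_snd_le_length (t : List (List A)) (x : A) :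
    (rInsertIdx sg t x).2 ≤ t.length := by
  induction t generalizing x with
  | nil => exact le_rfl
  | cons r rs ih =>
    rcases ho : (insertRow sg r x).2 with _ | y
    · simp [rInsertIdx_cons_of_none ho]
    · simpa [rInsertIdx_cons_of_some ho] using ih y

end Insertion

section RowBumping

variable {A : Type*} [LinearOrder A] {sg : A → ZMod 2}

namespace IsRowInsertion

variable {r r' r'' : List A} {y y' : A} {j j' : ℕ} {o o' : Option A}

lemma bumped_of_not_bumps (h : IsRowInsertion sg r y j r' o)
    (h' : IsRowInsertion sg r' y' j' r'' o')
    (hr : RowOK sg r) (hyy : ¬ Bumps sg y' y) :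
    o' = none ∨ ∃ z z', o = some z ∧ o' = some z' ∧ ¬ Bumps sg z' z := by
  have hjj : j < j' := by
    by_contra! hj'
    have hy : r'[j]? = some y := by simp [h.getElem?_eq]
    rcases hj'.eq_or_lt with rfl | hlt
    · exact hyy (h'.bumps y hy)
    · have := h.le_length
      obtain ⟨a, ha⟩ : ∃ a, r[j']? = some a := Option.isSome_iff_exists.1 (by simp; omega)
      have ha' : r'[j']? = some a := by rw [h.getElem?_eq, if_neg hlt.ne, ha]
      exact hyy ((h'.bumps a ha').trans_not_bumps (h.not_bumps_of_lt j' hlt a ha))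
  rw [h'.bumped_eq, h.getElem?_eq, if_neg hjj.ne', h.bumped_eq]
  rcases hz' : r[j']? with _ | z'
  · exact Or.inl rfl
  · have hj : j < r.length := hjj.trans (List.getElem?_eq_some_iff.1 hz').1
    obtain ⟨z, hz⟩ : ∃ z, r[j]? = some z := Option.isSome_iff_exists.1 (by simpa using hj)
    exact Or.inr ⟨z, z', hz, rfl, rowOK_iff_getElem?.1 hr j j' z z' hjj hz hz'⟩

lemma bumped_of_bumps (h : IsRowInsertion sg r y j r' o)
    (h' : IsRowInsertion sg r' y' j' r'' o')
    (hr : RowOK sg r) (hyy : Bumps sg y' y) :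
    ∃ z', o' = some z' ∧ ∀ z, o = some z → Bumps sg z' z := by
  have hy : r'[j]? = some y := by simp [h.getElem?_eq]
  have hjj : j' ≤ j := h'.le_of_bumps fun a ha => by cases hy.symm.trans ha; exact hyy
  rw [h'.bumped_eq, h.getElem?_eq, h.bumped_eq]
  rcases hjj.eq_or_lt with rfl | hlt
  · exact ⟨y, by simp, fun z hz => h.bumps z hz⟩
  · have := h.le_length
    obtain ⟨a, ha⟩ : ∃ a, r[j']? = some a := Option.isSome_iff_exists.1 (by simp; omega)
    exact ⟨a, by simp [hlt.ne, ha], fun z hz => h.bumps_bumped_of_lt hr hz hlt ha⟩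

end IsRowInsertion

theorem row_bumping_le {t : List (List A)} (ht : ∀ r ∈ t, RowOK sg r) {y y' : A}
    (h : ¬ Bumps sg y' y) :
    (rInsertIdx sg (rInsertIdx sg t y).1 y').2 ≤ (rInsertIdx sg t y).2 := by
  induction t generalizing y y' with
  | nil =>
    have : (insertRow sg [y] y').2 = none := by rw [insertRow_cons_of_not_bumps [] h]; rfl
    show (rInsertIdx sg [[y]] y').2 ≤ 0
    rw [rInsertIdx_cons_of_none this]
  | cons r rs ih =>
    obtain ⟨j, hj⟩ := insertRow_isRowInsertion sg r y
    obtain ⟨j', hj'⟩ := insertRow_isRowInsertion sg (insertRow sg r y).1 y'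
    obtain ⟨hr, hrs⟩ := List.forall_mem_cons.1 ht
    rcases ho : (insertRow sg r y).2 with _ | z <;> rw [ho] at hj
    · rw [rInsertIdx_cons_of_none ho]
      rcases hj.bumped_of_not_bumps hj' hr h with ho' | ⟨_, _, ⟨⟩, -⟩
      rw [rInsertIdx_cons_of_none ho']
    · rw [rInsertIdx_cons_of_some ho]
      rcases hj.bumped_of_not_bumps hj' hr h with ho' | ⟨_, z', ⟨⟩, ho', hzz⟩
      · simp [rInsertIdx_cons_of_none ho']
      · rw [rInsertIdx_cons_of_some ho']
        exact Nat.succ_le_succ (ih hrs hzz)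

theorem row_bumping_lt {t : List (List A)} (ht : ∀ r ∈ t, RowOK sg r) {y y' : A}
    (h : Bumps sg y' y) :
    (rInsertIdx sg t y).2 < (rInsertIdx sg (rInsertIdx sg t y).1 y').2 := by
  induction t generalizing y y' with
  | nil =>
    have : (insertRow sg [y] y').2 = some y := by rw [insertRow_cons_of_bumps [] h]
    show 0 < (rInsertIdx sg [[y]] y').2
    simp [rInsertIdx_cons_of_some this]
  | cons r rs ih =>
    obtain ⟨j, hj⟩ := insertRow_isRowInsertion sg r y
    obtain ⟨j', hj'⟩ := insertRow_isRowInsertion sg (insertRow sg r y).1 y'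
    obtain ⟨hr, hrs⟩ := List.forall_mem_cons.1 ht
    obtain ⟨z', ho', hzz⟩ := hj.bumped_of_bumps hj' hr h
    rcases ho : (insertRow sg r y).2 with _ | z
    · simp [rInsertIdx_cons_of_none ho, rInsertIdx_cons_of_some ho']
    · simp only [rInsertIdx_cons_of_some ho, rInsertIdx_cons_of_some ho']
      exact Nat.succ_lt_succ (ih hrs (hzz z ho))

end RowBumping

section Recording

variable {A : Type*} [LinearOrder A] {sg : A → ZMod 2}

/-- The entry `a` in row `k`, column `j` of a recording tableau was recorded before the letter `x`
at row `i`, column `c`: copies of a letter of signature `0` are recorded from left to right,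
those of a letter of signature `1` from top to bottom. -/
def RecordedBefore (sg : A → ZMod 2) (a : A) (k j : ℕ) (x : A) (i c : ℕ) : Prop :=
  a < x ∨ a = x ∧ (sg x = 0 → j < c) ∧ (sg x = 1 → k < i)

lemma RecordedBefore.trans {a x x' : A} {k j i c i' c' : ℕ} (h : RecordedBefore sg a k j x i c)
    (h' : RecordedBefore sg x i c x' i' c') : RecordedBefore sg a k j x' i' c' := by
  rcases h with h | ⟨rfl, h0, h1⟩
  · exact Or.inl (h.trans_le (by rcases h' with h' | ⟨rfl, -⟩; exacts [h'.le, le_rfl]))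
  · rcases h' with h' | ⟨rfl, h0', h1'⟩
    · exact Or.inl h'
    · exact Or.inr ⟨rfl, fun hs => (h0 hs).trans (h0' hs), fun hs => (h1 hs).trans (h1' hs)⟩

lemma RecordedBefore.not_bumps {a x : A} {i j c : ℕ} (h : RecordedBefore sg a i j x i c) :
    ¬ Bumps sg x a := by
  rcases h with h | ⟨rfl, -, h1⟩
  · exact fun hxa => hxa.le.not_gt h
  · exact fun hs => (h1 (bumps_self_iff.1 hs)).false

lemma RecordedBefore.bumps {a x : A} {k i c : ℕ} (h : RecordedBefore sg a k c x i c) :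
    Bumps sg a x := by
  rcases h with h | ⟨rfl, h0, -⟩
  · exact bumps_of_lt h
  · rcases zmod_two_eq_zero_or_eq_one (sg a) with hs | hs
    exacts [(h0 hs).false.elim, bumps_self_iff.2 hs]

theorem IsSuperTableau.addBox {q : List (List A)} (hq : IsSuperTableau sg q) {i : ℕ}
    (hi : i ≤ q.length) {x : A} (hshape : (shape (addBox q i x)).IsChain fun p q => q ≤ p)
    (hx : ∀ k j a, (q.getD k [])[j]? = some a →
      RecordedBefore sg a k j x i (q.getD i []).length) :
    IsSuperTableau sg (addBox q i x) := by
  induction q generalizing i with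
  | nil => exact isSuperTableau_singleton x
  | cons r rs ih =>
    obtain ⟨hr_ne, hr, hlen, hc, hrs⟩ := isSuperTableau_cons.1 hq
    cases i with
    | zero =>
      refine isSuperTableau_cons.2 ⟨by simp, rowOK_append_singleton.2 ⟨hr, fun a ha => ?_⟩,
        hlen.trans (by simp), colsOK_append_singleton_left hc hlen x, hrs⟩
      obtain ⟨j, hj⟩ := List.mem_iff_getElem?.1 ha
      exact (hx 0 j a (by simpa using hj)).not_bumps
    | succ i =>
      simp only [_root_.addBox, shape, List.map_cons, List.isChain_cons] at hshape ⊢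
      refine isSuperTableau_cons.2 ⟨hr_ne, hr, ?_, ?_, ih hrs (by simpa using hi) hshape.2 ?_⟩
      · have := hshape.1
        generalize _root_.addBox rs i x = L at this
        cases L <;> simp_all [shape]
      · rcases i with _ | i
        · have hhead : (_root_.addBox rs 0 x).headD [] = rs.headD [] ++ [x] := by cases rs <;> rfl
          have hrow : rs.getD 0 [] = rs.headD [] := by cases rs <;> rfl
          rw [hhead]
          refine colsOK_append_singleton_right hc fun a ha => ?_
          have := hx 0 (rs.headD []).length a (by simpa using ha)
          rw [List.getD_cons_succ, hrow] at this
          exact this.bumps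
        · rcases rs with _ | ⟨r₁, rs⟩
          · simp at hi
          · exact hc
      · intro k j a ha
        simpa [RecordedBefore] using hx (k + 1) j a (by simpa using ha)

end Recording

section RSK

variable {A B : Type*} [LinearOrder B] {sgB : B → ZMod 2}

def rskStep (sgB : B → ZMod 2) (p : List (List B) × List (List A)) (xy : A × B) :
    List (List B) × List (List A) :=
  ((rInsertIdx sgB p.1 xy.2).1, addBox p.2 (rInsertIdx sgB p.1 xy.2).2 xy.1)

lemma RSK_eq_foldl (sgB : B → ZMod 2) (w : List (A × B)) :
    RSK sgB w = w.foldl (rskStep sgB) ([], []) :=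
  rfl

lemma shape_foldl_rskStep (w : List (A × B)) {p : List (List B) × List (List A)}
    (hp : shape p.1 = shape p.2) :
    shape (w.foldl (rskStep sgB) p).1 = shape (w.foldl (rskStep sgB) p).2 := by
  induction w generalizing p with
  | nil => exact hp
  | cons xy w ih => exact ih ((shape_rInsertIdx _ _).trans (shape_addBox_congr hp _ _ _))

lemma length_flatten_foldl_rskStep (w : List (A × B)) (p : List (List B) × List (List A)) :
    (w.foldl (rskStep sgB) p).2.flatten.length = p.2.flatten.length + w.length := by
  induction w generalizing p with
  | nil => rfl
  | cons xy w ih =>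
    rw [List.foldl_cons, ih, rskStep, length_flatten_addBox, List.length_cons]
    omega

theorem shape_RSK_fst_eq_snd (sgB : B → ZMod 2) (w : List (A × B)) :
    shape (RSK sgB w).1 = shape (RSK sgB w).2 :=
  shape_foldl_rskStep w rfl

theorem length_flatten_RSK_snd (sgB : B → ZMod 2) (w : List (A × B)) :
    (RSK sgB w).2.flatten.length = w.length := by
  rw [RSK_eq_foldl, length_flatten_foldl_rskStep]
  simp

variable [LinearOrder A] {sgA : A → ZMod 2}

lemma IsSignedArray.step_cases {x x' : A} {y y' : B}
    (h : IsSignedArray sgA sgB [(x, y), (x', y')]) :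
    x < x' ∨ x = x' ∧ sgA x = 0 ∧ ¬ Bumps sgB y' y ∨
      x = x' ∧ sgA x = 1 ∧ Bumps sgB y' y := by
  have h := (List.isChain_cons_cons.1 h).1
  unfold pairLt at h
  rcases h with (hlt | ⟨rfl, ⟨h0, hy⟩ | ⟨h1, hy⟩⟩) | ⟨heq, hs⟩
  · exact Or.inl hlt
  · exact Or.inr (Or.inl ⟨rfl, h0, fun hb => hb.le.not_gt hy⟩)
  · exact Or.inr (Or.inr ⟨rfl, h1, bumps_of_lt hy⟩)
  · obtain ⟨rfl, rfl⟩ := Prod.mk.inj heq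
    rcases zmod_two_eq_zero_or_eq_one (sgA x) with hx | hx <;>
      rcases zmod_two_eq_zero_or_eq_one (sgB y) with hy | hy <;> rw [hx, hy] at hs
    · exact Or.inr (Or.inl ⟨rfl, hx, by rw [bumps_self_iff, hy]; decide⟩)
    · exact absurd hs (by decide)
    · exact absurd hs (by decide)
    · exact Or.inr (Or.inr ⟨rfl, hx, bumps_self_iff.2 hy⟩)

theorem recordedBefore_rInsertIdx {t : List (List B)} (ht : IsSuperTableau sgB t) {x x' : A}
    {y y' : B} (hw : IsSignedArray sgA sgB [(x, y), (x', y')]) :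
    RecordedBefore sgA x (rInsertIdx sgB t y).2 (t.getD (rInsertIdx sgB t y).2 []).length x'
      (rInsertIdx sgB (rInsertIdx sgB t y).1 y').2
      ((rInsertIdx sgB t y).1.getD (rInsertIdx sgB (rInsertIdx sgB t y).1 y').2 []).length := by
  set t₁ := (rInsertIdx sgB t y).1
  set i := (rInsertIdx sgB t y).2
  set i' := (rInsertIdx sgB t₁ y').2
  rcases hw.step_cases with hlt | ⟨rfl, h0, hyy⟩ | ⟨rfl, h1, hyy⟩
  · exact Or.inl hlt
  · refine Or.inr ⟨rfl, fun _ => ?_, fun h1 => absurd (h0.symm.trans h1) (by decide)⟩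
    -- the new box lies in a weakly higher row, hence in a strictly later column
    have hrow : (t₁.getD i []).length = (t.getD i []).length + 1 := by
      rw [length_getD_eq_of_shape_eq (shape_rInsertIdx t y),
        getD_addBox (rInsertIdx_snd_le_length t y), if_pos rfl, List.length_append,
        List.length_singleton]
    calc (t.getD i []).length < (t₁.getD i []).length := by omega
      _ ≤ (t₁.getD i' []).length :=
        (ht.rInsertIdx y).length_getD_antitone (row_bumping_le ht.rowOK hyy)
  · exact Or.inr ⟨rfl, fun h0 => absurd (h1.symm.trans h0) (by decide),
      fun _ => row_bumping_lt ht.rowOK hyy⟩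

/-- The pair `xy` is to be processed next from the state `p`: every entry of the recording
tableau was recorded before the box that `xy` will add to it. -/
structure RecordingInvariant (sgA : A → ZMod 2) (sgB : B → ZMod 2)
    (p : List (List B) × List (List A)) (xy : A × B) : Prop where
  isSuperTableau_fst : IsSuperTableau sgB p.1
  isSuperTableau_snd : IsSuperTableau sgA p.2
  shape_eq : shape p.1 = shape p.2
  recordedBefore : ∀ k j a, (p.2.getD k [])[j]? = some a →
    RecordedBefore sgA a k j xy.1 (rInsertIdx sgB p.1 xy.2).2
      (p.2.getD (rInsertIdx sgB p.1 xy.2).2 []).length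

lemma recordingInvariant_nil (xy : A × B) : RecordingInvariant sgA sgB ([], []) xy :=
  ⟨isSuperTableau_nil, isSuperTableau_nil, rfl, by simp⟩

namespace RecordingInvariant

variable {p : List (List B) × List (List A)} {xy : A × B}

lemma index_le_length (h : RecordingInvariant sgA sgB p xy) :
    (rInsertIdx sgB p.1 xy.2).2 ≤ p.2.length :=
  (rInsertIdx_snd_le_length _ _).trans (length_eq_of_shape_eq h.shape_eq).le

lemma shape_rskStep (h : RecordingInvariant sgA sgB p xy) :
    shape (rskStep sgB p xy).1 = shape (rskStep sgB p xy).2 :=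
  (shape_rInsertIdx _ _).trans (shape_addBox_congr h.shape_eq _ _ _)

lemma isSuperTableau_rskStep (h : RecordingInvariant sgA sgB p xy) :
    IsSuperTableau sgA (rskStep sgB p xy).2 := by
  refine h.isSuperTableau_snd.addBox h.index_le_length ?_ h.recordedBefore
  exact h.shape_rskStep ▸ (h.isSuperTableau_fst.rInsertIdx xy.2).2.1

lemma rskStep {xy' : A × B} (h : RecordingInvariant sgA sgB p xy)
    (hw : IsSignedArray sgA sgB [xy, xy']) : RecordingInvariant sgA sgB (rskStep sgB p xy) xy' where
  isSuperTableau_fst := h.isSuperTableau_fst.rInsertIdx _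
  isSuperTableau_snd := h.isSuperTableau_rskStep
  shape_eq := h.shape_rskStep
  recordedBefore k j a ha := by
    have hnext := recordedBefore_rInsertIdx h.isSuperTableau_fst hw
    rw [length_getD_eq_of_shape_eq h.shape_eq,
      length_getD_eq_of_shape_eq (t := (rInsertIdx sgB p.1 xy.2).1) h.shape_rskStep] at hnext
    rcases (getElem?_getD_addBox_eq_some_iff h.index_le_length).1 ha with ⟨rfl, rfl, rfl⟩ | ha
    · exact hnext
    · exact (h.recordedBefore k j a ha).trans hnext

theorem isSuperTableau_foldl {w : List (A × B)} (h : RecordingInvariant sgA sgB p xy)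
    (hw : IsSignedArray sgA sgB (xy :: w)) :
    IsSuperTableau sgA ((xy :: w).foldl (_root_.rskStep sgB) p).2 := by
  induction w generalizing p xy with
  | nil => exact h.isSuperTableau_rskStep
  | cons xy' w ih =>
    obtain ⟨hstep, hw⟩ := List.isChain_cons_cons.1 hw
    exact ih (h.rskStep (List.isChain_pair.2 hstep)) hw

end RecordingInvariant

theorem isSuperTableau_RSK_snd {w : List (A × B)} (hw : IsSignedArray sgA sgB w) :
    IsSuperTableau sgA (RSK sgB w).2 := by
  cases w with
  | nil => exact isSuperTableau_nil
  | cons xy w => exact (recordingInvariant_nil xy).isSuperTableau_foldl hw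

end RSK

theorem superRSK_recording_is_superTableau_general
    {A B : Type*} [LinearOrder A] [LinearOrder B]
    (sgA : A → ZMod 2) (sgB : B → ZMod 2)
    (w : List (A × B)) (hw : IsSignedArray sgA sgB w) :
    IsSuperTableau sgA (RSK sgB w).2 ∧
    shape (RSK sgB w).1 = shape (RSK sgB w).2 ∧
    (RSK sgB w).1.flatten.length = w.length ∧
    (RSK sgB w).2.flatten.length = w.length := by
  have hshape := shape_RSK_fst_eq_snd sgB w
  exact ⟨isSuperTableau_RSK_snd hw, hshape,
    (length_flatten_eq_of_shape_eq hshape).trans (length_flatten_RSK_snd sgB w),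
    length_flatten_RSK_snd sgB w⟩

/-- The recording filling `Q(w)` of a signed two-rowed array is a super
tableau over `Σ`, of the same shape as `T(w)`, and both contain `k` boxes. -/
theorem superRSK_recording_is_superTableau
    {A B : Type*} [LinearOrder A] [Countable A] [LinearOrder B] [Countable B]
    (sgA : A → ZMod 2) (sgB : B → ZMod 2)
    (w : List (A × B)) (hw : IsSignedArray sgA sgB w) :
    IsSuperTableau sgA (RSK sgB w).2 ∧
    shape (RSK sgB w).1 = shape (RSK sgB w).2 ∧
    (RSK sgB w).1.flatten.length = w.length ∧
    (RSK sgB w).2.flatten.length = w.length :=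
  superRSK_recording_is_superTableau_general sgA sgB w hw
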